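/- arXiv:1411.6317 — 2 statements merged into one kernel-verified Lean document; each statement's English description precedes it below -/
import Mathlib

section
/- Suppose p is a univariate polynomial such that |e^x − p(x)| ≤ δ·e^x for all x ∈ [−τ/2, τ/2], with δ ∈ (0,1]. Then for every symmetric matrix F with operator norm ‖F‖ ≤ τ, the trace-norm distance between the normalized states e^F/Tr(e^F) and p(F/2)^2/Tr(p(F/2)^2) is at most 6δ. -/
/-- The (ℓ² → ℓ²) operator norm of a real square matrix. -/
noncomputable def opNorm {r : ℕ} (A : Matrix (Fin r) (Fin r) ℝ) : ℝ :=
  ‖Matrix.toEuclideanCLM (𝕜 := ℝ) A‖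

/-- The trace (nuclear) norm of a real square matrix: `Tr √(Aᵀ A)`. -/
noncomputable def traceNorm {r : ℕ} (A : Matrix (Fin r) (Fin r) ℝ) : ℝ :=
  ((Matrix.posSemidef_conjTranspose_mul_self A).1.eigenvectorUnitary.1 *
    Matrix.diagonal (((↑) : ℝ → ℝ) ∘ (√·) ∘ (Matrix.posSemidef_conjTranspose_mul_self A).1.eigenvalues) *
    (star (Matrix.posSemidef_conjTranspose_mul_self A).1.eigenvectorUnitary :
      Matrix (Fin r) (Fin r) ℝ)).trace

/-! Every matrix in the statement is `g F` for a real function `g` (continuous functional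
calculus), so its trace is `∑ g λᵢ` and its trace norm is `∑ |g λᵢ|` over the eigenvalues `λᵢ`
of `F`, which lie in `[-τ, τ]`. With `eᵢ = e^(λᵢ/2)` and `qᵢ = p(λᵢ/2)` the hypothesis gives
`|eᵢ - qᵢ| ≤ δ eᵢ`, hence `|eᵢ² - qᵢ²| ≤ 3δ eᵢ²`; normalising two nonnegative vectors that agree
entrywise up to relative error `3δ` moves them at most `6δ` apart in `ℓ¹`. -/

open Matrix
open scoped Matrix.Norms.L2Operator

namespace Matrix.IsHermitian

variable {n : Type*} [Fintype n] [DecidableEq n]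

lemma trace_cfc {𝕜 : Type*} [RCLike 𝕜] {A : Matrix n n 𝕜} (hA : A.IsHermitian) (f : ℝ → ℝ) :
    (cfc f A).trace = ∑ i, (f (hA.eigenvalues i) : 𝕜) := by
  rw [hA.cfc_eq, IsHermitian.cfc, Unitary.conjStarAlgAut_apply, trace_mul_cycle,
    Unitary.coe_star_mul_self, one_mul, trace_diagonal]
  rfl

lemma abs_eigenvalues_le_norm {A : Matrix n n ℝ} (hA : A.IsHermitian) (i : n) :
    |hA.eigenvalues i| ≤ ‖A‖ := by
  have : Nonempty n := ⟨i⟩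
  exact spectrum.norm_le_norm_of_mem (hA.eigenvalues_mem_spectrum_real i)

end Matrix.IsHermitian

lemma traceNorm_eq_trace_cfc_sqrt {r : ℕ} (X : Matrix (Fin r) (Fin r) ℝ) :
    traceNorm X = (cfc Real.sqrt (Xᴴ * X)).trace := by
  rw [(posSemidef_conjTranspose_mul_self X).1.cfc_eq]
  rfl

lemma traceNorm_cfc {r : ℕ} {A : Matrix (Fin r) (Fin r) ℝ} (hA : A.IsHermitian) (f : ℝ → ℝ) :
    traceNorm (cfc f A) = ∑ i, |f (hA.eigenvalues i)| := by
  have hf := A.finite_real_spectrum.continuousOn f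
  rw [traceNorm_eq_trace_cfc_sqrt, ← star_eq_conjTranspose, (cfc_predicate f A).star_eq,
    ← cfc_mul f f A hf hf, ← cfc_comp' Real.sqrt (fun x => f x * f x) A
      ((A.finite_real_spectrum.image _).continuousOn _) (hf.mul hf), hA.trace_cfc]
  simp [Real.sqrt_mul_self_eq_abs]

lemma sum_abs_inv_sum_mul_sub_le {ι : Type*} [Fintype ι] {a b : ι → ℝ} {ε : ℝ} (hε : 0 ≤ ε)
    (hb : ∀ i, 0 ≤ b i) (hab : ∀ i, |a i - b i| ≤ ε * a i) :
    ∑ i, |(∑ j, a j)⁻¹ * a i - (∑ j, b j)⁻¹ * b i| ≤ 2 * ε := by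
  set A := ∑ j, a j
  set B := ∑ j, b j
  set S := ∑ i, |a i - b i|
  have hA : 0 ≤ A := Finset.sum_nonneg fun i _ => by nlinarith [neg_abs_le (a i - b i), hab i, hb i]
  have hB : 0 ≤ B := Finset.sum_nonneg fun i _ => hb i
  have hSA : S ≤ ε * A := by
    rw [Finset.mul_sum]
    exact Finset.sum_le_sum fun i _ => hab i
  have hBA : |B - A| ≤ S := by
    rw [abs_sub_comm, ← Finset.sum_sub_distrib]
    exact Finset.abs_sum_le_sum_abs _ _
  have hAS : A⁻¹ * S ≤ ε := by
    rcases hA.eq_or_lt with hA0 | hA0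
    · simp [← hA0, hε]
    · calc A⁻¹ * S ≤ A⁻¹ * (ε * A) := by gcongr
        _ = ε := by field_simp
  have hrenorm : |A⁻¹ - B⁻¹| * B ≤ A⁻¹ * S := by
    rcases hB.eq_or_lt with hB0 | hB0
    · have hS : 0 ≤ S := Finset.sum_nonneg fun i _ => abs_nonneg _
      simp [← hB0, mul_nonneg (inv_nonneg.mpr hA) hS]
    have hA0 : 0 < A := by
      by_contra! h
      nlinarith [le_abs_self (B - A)]
    calc |A⁻¹ - B⁻¹| * B = |(A⁻¹ - B⁻¹) * B| := by rw [abs_mul, abs_of_pos hB0]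
      _ = |A⁻¹ * (B - A)| := by congr 1; field_simp
      _ = A⁻¹ * |B - A| := by rw [abs_mul, abs_of_pos (inv_pos.mpr hA0)]
      _ ≤ A⁻¹ * S := by gcongr
  calc ∑ i, |A⁻¹ * a i - B⁻¹ * b i|
      ≤ ∑ i, (A⁻¹ * |a i - b i| + |A⁻¹ - B⁻¹| * b i) := by
        refine Finset.sum_le_sum fun i _ => ?_
        calc |A⁻¹ * a i - B⁻¹ * b i| = |A⁻¹ * (a i - b i) + (A⁻¹ - B⁻¹) * b i| := by ring_nf
          _ ≤ A⁻¹ * |a i - b i| + |A⁻¹ - B⁻¹| * b i := by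
            refine (abs_add_le _ _).trans_eq ?_
            rw [abs_mul, abs_mul, abs_of_nonneg (inv_nonneg.mpr hA), abs_of_nonneg (hb i)]
    _ = A⁻¹ * S + |A⁻¹ - B⁻¹| * B := by rw [Finset.sum_add_distrib, Finset.mul_sum, Finset.mul_sum]
    _ ≤ 2 * ε := by linarith

lemma traceNorm_inv_trace_smul_cfc_sub_le {r : ℕ} {A : Matrix (Fin r) (Fin r) ℝ}
    (hA : A.IsHermitian) {f g : ℝ → ℝ} {ε : ℝ} (hε : 0 ≤ ε) (hg : ∀ i, 0 ≤ g (hA.eigenvalues i))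
    (hfg : ∀ i, |f (hA.eigenvalues i) - g (hA.eigenvalues i)| ≤ ε * f (hA.eigenvalues i)) :
    traceNorm ((cfc f A).trace⁻¹ • cfc f A - (cfc g A).trace⁻¹ • cfc g A) ≤ 2 * ε := by
  have hcont (h : ℝ → ℝ) : ContinuousOn h (spectrum ℝ A) := A.finite_real_spectrum.continuousOn h
  rw [← cfc_smul _ f A (hcont f), ← cfc_smul _ g A (hcont g), ← cfc_sub _ _ A (hcont _) (hcont _),
    traceNorm_cfc hA, hA.trace_cfc, hA.trace_cfc]
  exact sum_abs_inv_sum_mul_sub_le hε hg hfg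

lemma abs_sq_sub_sq_le_of_abs_sub_le {e q δ : ℝ} (he : 0 ≤ e) (hδ : δ ≤ 1)
    (h : |e - q| ≤ δ * e) : |e ^ 2 - q ^ 2| ≤ 3 * δ * e ^ 2 := by
  have hsum : |e + q| ≤ 3 * e := by
    calc |e + q| = |2 * e - (e - q)| := by ring_nf
      _ ≤ |2 * e| + |e - q| := abs_sub _ _
      _ ≤ 3 * e := by rw [abs_of_nonneg (by positivity)]; nlinarith
  calc |e ^ 2 - q ^ 2| = |e - q| * |e + q| := by rw [← abs_mul]; ring_nf
    _ ≤ δ * e * (3 * e) := mul_le_mul h hsum (abs_nonneg _) ((abs_nonneg _).trans h)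
    _ = 3 * δ * e ^ 2 := by ring

theorem stmt7_general (n : ℕ) (δ τ : ℝ) (hδ0 : 0 < δ) (hδ1 : δ ≤ 1)
    (p : Polynomial ℝ)
    (hp : ∀ x ∈ Set.Icc (-(τ / 2)) (τ / 2), |Real.exp x - p.eval x| ≤ δ * Real.exp x)
    (F : Matrix (Fin n) (Fin n) ℝ) (hF : F.IsHermitian) (hFn : opNorm F ≤ τ) :
    traceNorm
      ((NormedSpace.exp F).trace⁻¹ • NormedSpace.exp F -
        ((Polynomial.aeval ((2 : ℝ)⁻¹ • F) p) ^ 2).trace⁻¹ •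
          (Polynomial.aeval ((2 : ℝ)⁻¹ • F) p) ^ 2) ≤ 6 * δ := by
  have hsq : Polynomial.aeval ((2 : ℝ)⁻¹ • F) p ^ 2 = cfc (fun x => p.eval (x / 2) ^ 2) F := by
    rw [← cfc_polynomial p ((2 : ℝ)⁻¹ • F), ← cfc_comp_smul _ _ F, ← cfc_pow _ 2 F]
    simp [div_eq_inv_mul]
  rw [← CFC.real_exp_eq_normedSpace_exp hF, hsq, show 6 * δ = 2 * (3 * δ) by ring]
  refine traceNorm_inv_trace_smul_cfc_sub_le hF (by positivity) (fun i => sq_nonneg _) fun i => ?_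
  -- `opNorm F` is `‖F‖` for the L2 operator norm opened above.
  have hi := abs_le.mp ((hF.abs_eigenvalues_le_norm i).trans hFn)
  have h := hp (hF.eigenvalues i / 2) ⟨by linarith, by linarith⟩
  rw [show Real.exp (hF.eigenvalues i) = Real.exp (hF.eigenvalues i / 2) ^ 2 by
    rw [sq, ← Real.exp_add, add_halves]]
  exact abs_sq_sub_sq_le_of_abs_sub_le (Real.exp_nonneg _) hδ1 h

/-- Suppose the univariate polynomial `p` satisfies
`|e^x − p(x)| ≤ δ·e^x` on `[−τ/2, τ/2]`, with `δ ∈ (0,1]`.  Then for every real symmetric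
matrix `F` with `‖F‖ ≤ τ`, the trace-norm distance between the normalized states
`e^F/Tr(e^F)` and `p(F/2)²/Tr(p(F/2)²)` is at most `6δ`. -/
theorem stmt7 (n : ℕ) (hn : 0 < n) (δ τ : ℝ) (hδ0 : 0 < δ) (hδ1 : δ ≤ 1)
    (p : Polynomial ℝ)
    (hp : ∀ x ∈ Set.Icc (-(τ / 2)) (τ / 2), |Real.exp x - p.eval x| ≤ δ * Real.exp x)
    (F : Matrix (Fin n) (Fin n) ℝ) (hF : F.IsHermitian) (hFn : opNorm F ≤ τ) :
    traceNorm
      ((NormedSpace.exp F).trace⁻¹ • NormedSpace.exp F -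
        ((Polynomial.aeval ((2 : ℝ)⁻¹ • F) p) ^ 2).trace⁻¹ •
          (Polynomial.aeval ((2 : ℝ)⁻¹ • F) p) ^ 2) ≤ 6 * δ :=
  stmt7_general n δ τ hδ0 hδ1 p hp F hF hFn
end

section
/- Let B : {±1}^n → ℝ^{p×p} have degree at most ℓ as a matrix-valued multilinear polynomial. For a uniformly random m-subset S of [n] and uniformly random x, the high part B_{S,high}(x) = ∑_{|α∩S| > d/2} B̂(α)χ_α(x) satisfies E_{S,x} ‖B_{S,high}(x)‖_F² ≤ (ℓm/(n−m))^{d/2} · E_x ‖B(x)‖_F². -/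
/-- The real value of a Boolean cube coordinate (`{0,1}` encoding). -/
def bval (b : Bool) : ℝ := if b then 1 else 0

/-- The `±1` value of a Boolean cube coordinate. -/
def sgn (b : Bool) : ℝ := if b then -1 else 1

/-- The Fourier character `χ_α(x) = ∏_{i∈α} x_i` on `{±1}^n`. -/
def chi {n : ℕ} (α : Finset (Fin n)) (x : Fin n → Bool) : ℝ := ∏ i ∈ α, sgn (x i)

/-- The matrix-valued Fourier coefficient `B̂(α) = E_x χ_α(x)·B(x)`. -/
noncomputable def matFourierCoeff {n p : ℕ} (B : (Fin n → Bool) → Matrix (Fin p) (Fin p) ℝ)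
    (α : Finset (Fin n)) : Matrix (Fin p) (Fin p) ℝ :=
  ((2 : ℝ) ^ n)⁻¹ • ∑ x : Fin n → Bool, chi α x • B x

/-- The high part `B_{S,high}(x) = ∑_{|α∩S| > d/2} B̂(α) χ_α(x)` of `B` relative to `S`. -/
noncomputable def highPart {n p : ℕ} (d : ℕ)
    (B : (Fin n → Bool) → Matrix (Fin p) (Fin p) ℝ) (S : Finset (Fin n))
    (x : Fin n → Bool) : Matrix (Fin p) (Fin p) ℝ :=
  ∑ α ∈ Finset.filter (fun α : Finset (Fin n) => d < 2 * (α ∩ S).card) Finset.univ,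
    chi α x • matFourierCoeff B α

/-- The squared Frobenius norm `‖M‖_F² = ∑_{i,j} M_{ij}²`. -/
def frobSq {p : ℕ} (M : Matrix (Fin p) (Fin p) ℝ) : ℝ := ∑ i, ∑ j, (M i j) ^ 2

/-- Restriction `x_S ∈ {0,1}^m` of `x ∈ {0,1}^n` to an `m`-element subset `S` (in
increasing order of coordinates). -/
noncomputable def restrict (m n : ℕ) (S : Finset (Fin n)) (x : Fin n → Bool) :
    Fin m → Bool :=
  if h : S.card = m then fun i => x ((S.orderIsoOfFin h) i) else fun _ => false

/-- Average over a uniformly random `m`-subset `S` of `[n]` and a uniform `x ∈ {0,1}^n`. -/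
noncomputable def avgSx (m n : ℕ) (f : Finset (Fin n) → (Fin n → Bool) → ℝ) : ℝ :=
  (∑ S ∈ Finset.powersetCard m (Finset.univ : Finset (Fin n)),
      ∑ x : Fin n → Bool, f S x) / ((Nat.choose n m : ℝ) * 2 ^ n)

/-- `g : {0,1}^m → ℝ` has (multilinear) degree at most `k`. -/
def HasDegLE (m k : ℕ) (g : (Fin m → Bool) → ℝ) : Prop :=
  ∃ c : Finset (Fin m) → ℝ, (∀ S : Finset (Fin m), k < S.card → c S = 0) ∧
    ∀ x, g x = ∑ S : Finset (Fin m), c S * ∏ i ∈ S, bval (x i)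

/-- A degree-`d` pseudo-density on `{0,1}^m`. -/
def IsPseudoDensity (m d : ℕ) (D : (Fin m → Bool) → ℝ) : Prop :=
  (∑ x : Fin m → Bool, D x) / 2 ^ m = 1 ∧
    ∀ g : (Fin m → Bool) → ℝ, HasDegLE m (d / 2) g →
      0 ≤ (∑ x : Fin m → Bool, D x * g x ^ 2) / 2 ^ m

/-!
Orthogonality of the characters gives `E_x ‖B_{S,high}(x)‖_F² = ∑_{|α∩S|>d/2} ‖B̂(α)‖_F²`, so
averaging over `S` weights each `‖B̂(α)‖_F²` by `Pr_S[|α ∩ S| > d/2]`. With `k = ⌊d/2⌋ + 1`, a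
union bound over the `k`-subsets of `α` bounds this probability by
`C(|α|,k) C(n-k,m-k) / C(n,m) = C(|α|,k) m^{(k)} / n^{(k)} ≤ (ℓm/(n-m))^k`, which is at most
`(ℓm/(n-m))^{d/2}` when the base is below `1` (otherwise the probability bound `1` suffices).
Bessel's inequality `∑_α ‖B̂(α)‖_F² ≤ E_x ‖B(x)‖_F²` concludes.
-/

open Finset

lemma sum_chi_mul_chi {n : ℕ} (α β : Finset (Fin n)) :
    ∑ x : Fin n → Bool, chi α x * chi β x = if α = β then (2 : ℝ) ^ n else 0 := by
  have hprod : ∀ x : Fin n → Bool, chi α x * chi β x =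
      ∏ i, (if i ∈ α then sgn (x i) else 1) * (if i ∈ β then sgn (x i) else 1) := by
    intro x
    rw [prod_mul_distrib, prod_ite_mem, prod_ite_mem, univ_inter, univ_inter, chi, chi]
  simp_rw [hprod]
  rw [← Fintype.prod_sum fun i b => (if i ∈ α then sgn b else 1) * (if i ∈ β then sgn b else 1)]
  split_ifs with hαβ
  · subst hαβ
    have h2 : ∀ i, ∑ b : Bool,
        (if i ∈ α then sgn b else 1) * (if i ∈ α then sgn b else 1) = 2 := by
      intro i; by_cases hi : i ∈ α <;> simp [hi, sgn]; norm_num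
    simp only [h2, prod_const, card_univ, Fintype.card_fin]
  · obtain ⟨i, hi⟩ : ∃ i, ¬ (i ∈ α ↔ i ∈ β) := by
      by_contra! h; exact hαβ (Finset.ext h)
    apply prod_eq_zero (mem_univ i)
    by_cases hiα : i ∈ α <;> by_cases hiβ : i ∈ β <;> simp [hiα, hiβ, sgn] at hi ⊢

lemma sum_sq_sum_mul_chi {n : ℕ} (F : Finset (Finset (Fin n))) (a : Finset (Fin n) → ℝ) :
    ∑ x : Fin n → Bool, (∑ α ∈ F, a α * chi α x) ^ 2 = 2 ^ n * ∑ α ∈ F, a α ^ 2 := by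
  calc ∑ x : Fin n → Bool, (∑ α ∈ F, a α * chi α x) ^ 2
      = ∑ α ∈ F, ∑ β ∈ F, a α * a β * ∑ x : Fin n → Bool, chi α x * chi β x := by
        simp_rw [sq, sum_mul_sum, mul_sum]
        rw [sum_comm]
        refine sum_congr rfl fun α _ => ?_
        rw [sum_comm]
        exact sum_congr rfl fun β _ => sum_congr rfl fun x _ => by ring
    _ = 2 ^ n * ∑ α ∈ F, a α ^ 2 := by
        simp_rw [sum_chi_mul_chi, mul_ite, mul_zero, sum_ite_eq, mul_sum]
        exact sum_congr rfl fun α hα => by rw [if_pos hα]; ring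

lemma two_pow_mul_sum_sq_fourierCoeff_le {n : ℕ} (f : (Fin n → Bool) → ℝ) :
    2 ^ n * ∑ α : Finset (Fin n), ((2 ^ n : ℝ)⁻¹ * ∑ x, chi α x * f x) ^ 2 ≤ ∑ x, f x ^ 2 := by
  set c : Finset (Fin n) → ℝ := fun α => (2 ^ n : ℝ)⁻¹ * ∑ x, chi α x * f x
  set g : (Fin n → Bool) → ℝ := fun x => ∑ α, c α * chi α x
  have hfg : ∑ x, f x * g x = 2 ^ n * ∑ α, c α ^ 2 := by
    simp_rw [g, mul_sum, sq]
    rw [sum_comm]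
    refine sum_congr rfl fun α _ => ?_
    have : ∑ x, chi α x * f x = 2 ^ n * c α := by simp [c]
    rw [show ∑ x, f x * (c α * chi α x) = c α * ∑ x, chi α x * f x by
      rw [mul_sum]; exact sum_congr rfl fun x _ => by ring, this]
    ring
  have hgg : ∑ x, g x ^ 2 = 2 ^ n * ∑ α, c α ^ 2 := sum_sq_sum_mul_chi univ c
  have hres : 0 ≤ ∑ x, (f x - g x) ^ 2 := sum_nonneg fun x _ => sq_nonneg _
  simp_rw [sub_sq, sum_add_distrib, sum_sub_distrib, mul_assoc, ← mul_sum, hfg, hgg] at hres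
  linarith

lemma frobSq_nonneg {p : ℕ} (M : Matrix (Fin p) (Fin p) ℝ) : 0 ≤ frobSq M :=
  sum_nonneg fun _ _ => sum_nonneg fun _ _ => sq_nonneg _

lemma sum_frobSq {ι : Type*} {p : ℕ} (s : Finset ι) (M : ι → Matrix (Fin p) (Fin p) ℝ) :
    ∑ a ∈ s, frobSq (M a) = ∑ i, ∑ j, ∑ a ∈ s, M a i j ^ 2 := by
  simp only [frobSq]
  rw [sum_comm]
  exact sum_congr rfl fun i _ => sum_comm

lemma sum_frobSq_sum_chi_smul {n p : ℕ} (F : Finset (Finset (Fin n)))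
    (V : Finset (Fin n) → Matrix (Fin p) (Fin p) ℝ) :
    ∑ x : Fin n → Bool, frobSq (∑ α ∈ F, chi α x • V α) = 2 ^ n * ∑ α ∈ F, frobSq (V α) := by
  simp only [sum_frobSq, Matrix.sum_apply, Matrix.smul_apply, smul_eq_mul, mul_sum]
  refine sum_congr rfl fun i _ => sum_congr rfl fun j _ => ?_
  rw [← mul_sum, ← sum_sq_sum_mul_chi]
  exact sum_congr rfl fun x _ => by simp_rw [mul_comm]

lemma two_pow_mul_sum_frobSq_matFourierCoeff_le {n p : ℕ}
    (B : (Fin n → Bool) → Matrix (Fin p) (Fin p) ℝ) :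
    2 ^ n * ∑ α, frobSq (matFourierCoeff B α) ≤ ∑ x, frobSq (B x) := by
  have hcoeff : ∀ α i j, matFourierCoeff B α i j = (2 ^ n : ℝ)⁻¹ * ∑ x, chi α x * B x i j := by
    simp [matFourierCoeff, Matrix.sum_apply]
  rw [sum_frobSq, sum_frobSq, mul_sum]
  refine sum_le_sum fun i _ => ?_
  rw [mul_sum]
  refine sum_le_sum fun j _ => ?_
  simp only [hcoeff]
  exact two_pow_mul_sum_sq_fourierCoeff_le fun x => B x i j

lemma min_one_pow_le_rpow {b y : ℝ} {k : ℕ} (hb : 0 ≤ b) (hy : 0 ≤ y) (hyk : y ≤ k) :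
    min 1 (b ^ k) ≤ b ^ y := by
  rcases le_total 1 b with h1 | h1
  · exact (min_le_left _ _).trans (Real.one_le_rpow h1 hy)
  · rw [← Real.rpow_natCast]
    exact (min_le_right _ _).trans (Real.rpow_le_rpow_of_exponent_ge' hb h1 hy hyk)

section Counting

variable {ι : Type*} [Fintype ι] [DecidableEq ι]

lemma card_filter_le_card_inter_le_choose_mul_choose (α : Finset ι) {k m : ℕ} (hkm : k ≤ m) :
    #{S ∈ powersetCard m (univ : Finset ι) | k ≤ #(α ∩ S)} ≤
      (#α).choose k * (Fintype.card ι - k).choose (m - k) := by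
  have hcover : {S ∈ powersetCard m (univ : Finset ι) | k ≤ #(α ∩ S)} ⊆
      (powersetCard k α).biUnion fun T => {S ∈ powersetCard m (univ : Finset ι) | T ⊆ S} := by
    intro S hS
    rw [mem_filter] at hS
    obtain ⟨T, hTαS, hTk⟩ := exists_subset_card_eq hS.2
    simp only [mem_biUnion, mem_powersetCard, mem_filter]
    exact ⟨T, ⟨hTαS.trans inter_subset_left, hTk⟩, mem_powersetCard.mp hS.1,
      hTαS.trans inter_subset_right⟩
  calc #{S ∈ powersetCard m (univ : Finset ι) | k ≤ #(α ∩ S)}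
      ≤ ∑ T ∈ powersetCard k α, #{S ∈ powersetCard m (univ : Finset ι) | T ⊆ S} :=
        (card_le_card hcover).trans card_biUnion_le
    _ = ∑ T ∈ powersetCard k α, (Fintype.card ι - k).choose (m - k) := by
        refine sum_congr rfl fun T hT => ?_
        rw [mem_powersetCard] at hT
        rw [card_filter_powersetCard_subset T univ m (subset_univ T) (hT.2 ▸ hkm), hT.2,
          card_univ]
    _ = (#α).choose k * (Fintype.card ι - k).choose (m - k) := by
        rw [sum_const, card_powersetCard, smul_eq_mul]

lemma card_filter_le_card_inter_mul_pow_le (α : Finset ι) (k m : ℕ) :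
    #{S ∈ powersetCard m (univ : Finset ι) | k ≤ #(α ∩ S)} * (Fintype.card ι - m) ^ k ≤
      (Fintype.card ι).choose m * (#α * m) ^ k := by
  set n := Fintype.card ι
  by_cases hkm : k ≤ m
  swap
  · have hempty : {S ∈ powersetCard m (univ : Finset ι) | k ≤ #(α ∩ S)} = ∅ := by
      refine filter_false_of_mem fun S hS hk => hkm ?_
      exact hk.trans ((card_le_card inter_subset_right).trans (mem_powersetCard.mp hS).2.le)
    simp [hempty]
  have hdouble : (n - k).choose (m - k) * n.descFactorial k = n.choose m * m.descFactorial k := by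
    rw [Nat.descFactorial_eq_factorial_mul_choose, Nat.descFactorial_eq_factorial_mul_choose,
      mul_left_comm, mul_left_comm (n.choose m), Nat.choose_mul hkm]
    ring
  calc #{S ∈ powersetCard m (univ : Finset ι) | k ≤ #(α ∩ S)} * (n - m) ^ k
      ≤ (#α).choose k * (n - k).choose (m - k) * n.descFactorial k := by
        gcongr
        · exact card_filter_le_card_inter_le_choose_mul_choose α hkm
        · exact (Nat.pow_le_pow_left (by omega) k).trans (Nat.pow_sub_le_descFactorial n k)
    _ = (#α).choose k * (n.choose m * m.descFactorial k) := by rw [mul_assoc, hdouble]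
    _ ≤ #α ^ k * (n.choose m * m ^ k) := by
        gcongr
        · exact Nat.choose_le_pow _ _
        · exact Nat.descFactorial_le_pow _ _
    _ = n.choose m * (#α * m) ^ k := by ring

lemma card_filter_lt_two_mul_card_inter_le (α : Finset ι) {d ℓ m : ℕ} (hα : #α ≤ ℓ)
    (hmn : m < Fintype.card ι) :
    (#{S ∈ powersetCard m (univ : Finset ι) | d < 2 * #(α ∩ S)} : ℝ) ≤
      (Fintype.card ι).choose m * ((ℓ * m : ℝ) / (Fintype.card ι - m)) ^ ((d : ℝ) / 2) := by
  set n := Fintype.card ι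
  set k := d / 2 + 1
  set cnt := #{S ∈ powersetCard m (univ : Finset ι) | d < 2 * #(α ∩ S)}
  have hcnt : cnt = #{S ∈ powersetCard m (univ : Finset ι) | k ≤ #(α ∩ S)} :=
    congrArg card (filter_congr fun S _ => by omega)
  have hnm : (0 : ℝ) < n - m := sub_pos.mpr (by exact_mod_cast hmn)
  have hle_choose : (cnt : ℝ) ≤ n.choose m := by
    have : cnt ≤ n.choose m := by
      simpa [n] using card_filter_le (powersetCard m (univ : Finset ι)) _
    exact_mod_cast this
  have hle_pow : (cnt : ℝ) ≤ n.choose m * ((ℓ * m : ℝ) / (n - m)) ^ k := by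
    have h := card_filter_le_card_inter_mul_pow_le α k m
    rw [← hcnt] at h
    have hreal : (cnt : ℝ) * (n - m) ^ k ≤ n.choose m * (ℓ * m) ^ k := by
      have hα' : (#α : ℝ) ≤ ℓ := by exact_mod_cast hα
      calc (cnt : ℝ) * (n - m) ^ k = ((cnt * (n - m) ^ k : ℕ) : ℝ) := by
            push_cast [Nat.cast_sub hmn.le]; ring
        _ ≤ ((n.choose m * (#α * m) ^ k : ℕ) : ℝ) := by exact_mod_cast h
        _ ≤ n.choose m * (ℓ * m) ^ k := by push_cast; gcongr
    rw [div_pow, ← mul_div_assoc, le_div_iff₀ (by positivity)]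
    exact hreal
  calc (cnt : ℝ) ≤ n.choose m * min 1 (((ℓ * m : ℝ) / (n - m)) ^ k) := by
        rw [mul_min_of_nonneg _ _ (by positivity), mul_one]
        exact le_min hle_choose hle_pow
    _ ≤ n.choose m * ((ℓ * m : ℝ) / (n - m)) ^ ((d : ℝ) / 2) := by
        gcongr
        refine min_one_pow_le_rpow (by positivity) (by positivity) ?_
        have : (d : ℝ) ≤ 2 * (d / 2 : ℕ) + 1 := by exact_mod_cast Nat.lt_succ_iff.mp (by omega)
        push_cast [k]
        linarith

end Counting

lemma sum_sum_frobSq_highPart {n p : ℕ} (d : ℕ) (B : (Fin n → Bool) → Matrix (Fin p) (Fin p) ℝ)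
    (P : Finset (Finset (Fin n))) :
    ∑ S ∈ P, ∑ x, frobSq (highPart d B S x) =
      2 ^ n * ∑ α, (#{S ∈ P | d < 2 * #(α ∩ S)} : ℝ) * frobSq (matFourierCoeff B α) := by
  simp only [highPart, sum_frobSq_sum_chi_smul]
  rw [← mul_sum]
  congr 1
  simp only [sum_filter]
  rw [sum_comm]
  refine sum_congr rfl fun α _ => ?_
  rw [← sum_filter, sum_const, nsmul_eq_mul]

theorem stmt14_general (n d ℓ m p : ℕ) (hmn : m < n)
    (B : (Fin n → Bool) → Matrix (Fin p) (Fin p) ℝ)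
    (hBdeg : ∀ α : Finset (Fin n), ℓ < α.card → matFourierCoeff B α = 0) :
    avgSx m n (fun S x => frobSq (highPart d B S x)) ≤
      (((ℓ : ℝ) * m) / ((n : ℝ) - m)) ^ ((d : ℝ) / 2) *
        ((∑ x : Fin n → Bool, frobSq (B x)) / 2 ^ n) := by
  set b := (((ℓ : ℝ) * m) / ((n : ℝ) - m)) ^ ((d : ℝ) / 2)
  have hnm : (0 : ℝ) < n - m := sub_pos.mpr (by exact_mod_cast hmn)
  have hb : 0 ≤ b := by positivity
  have hcount : ∀ α : Finset (Fin n),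
      (#{S ∈ powersetCard m univ | d < 2 * #(α ∩ S)} : ℝ) * frobSq (matFourierCoeff B α) ≤
        n.choose m * b * frobSq (matFourierCoeff B α) := by
    intro α
    by_cases hα : #α ≤ ℓ
    · have := card_filter_lt_two_mul_card_inter_le α (d := d) hα (by simpa using hmn)
      simp only [Fintype.card_fin] at this
      exact mul_le_mul_of_nonneg_right this (frobSq_nonneg _)
    · simp [hBdeg α (by omega), frobSq]
  have hchoose : (0 : ℝ) < n.choose m := by exact_mod_cast Nat.choose_pos hmn.le
  rw [avgSx, sum_sum_frobSq_highPart, div_le_iff₀ (by positivity)]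
  calc 2 ^ n * ∑ α, (#{S ∈ powersetCard m univ | d < 2 * #(α ∩ S)} : ℝ) *
          frobSq (matFourierCoeff B α)
      ≤ 2 ^ n * ∑ α, n.choose m * b * frobSq (matFourierCoeff B α) := by
        gcongr 2 ^ n * ?_; exact sum_le_sum fun α _ => hcount α
    _ = n.choose m * b * (2 ^ n * ∑ α, frobSq (matFourierCoeff B α)) := by
        rw [← mul_sum]; ring
    _ ≤ n.choose m * b * ∑ x, frobSq (B x) := by
        gcongr; exact two_pow_mul_sum_frobSq_matFourierCoeff_le B
    _ = b * ((∑ x, frobSq (B x)) / 2 ^ n) * (n.choose m * 2 ^ n) := by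
        field_simp

/-- Let `B : {±1}^n → ℝ^{p×p}` have degree at most `ℓ` (all Fourier
coefficients `B̂(α)` with `|α| > ℓ` vanish).  For a uniformly random `m`-subset `S` of `[n]`
and uniform `x`, the high part `B_{S,high}(x) = ∑_{|α∩S| > d/2} B̂(α)χ_α(x)` satisfies
`E_{S,x} ‖B_{S,high}(x)‖_F² ≤ (ℓm/(n−m))^{d/2} · E_x ‖B(x)‖_F²`. -/
theorem stmt14 (n d ℓ m p : ℕ) (hd : 0 < d) (hℓ : 0 < ℓ) (hm : 0 < m)
    (hdn : d ≤ n) (hℓn : ℓ ≤ n) (hmn : m < n)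
    (B : (Fin n → Bool) → Matrix (Fin p) (Fin p) ℝ)
    (hBdeg : ∀ α : Finset (Fin n), ℓ < α.card → matFourierCoeff B α = 0) :
    avgSx m n (fun S x => frobSq (highPart d B S x)) ≤
      (((ℓ : ℝ) * m) / ((n : ℝ) - m)) ^ ((d : ℝ) / 2) *
        ((∑ x : Fin n → Bool, frobSq (B x)) / 2 ^ n) :=
  stmt14_general n d ℓ m p hmn B hBdeg
end
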